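/- Let G be a graph and M = M[IAS(G)]. If every X ⊆ V has c_G(X) = min{|X|, |V−X|}, then κ(M) = n. Otherwise, κ(M) = 1 + 2·min{c_G(X) : X ⊆ V and c_G(X) < min{|X|, |V−X|}}. -/

import Mathlib

open scoped ENat

variable {V : Type*} [Fintype V] [DecidableEq V]

/-- The column of the matrix `IAS(G) = (I | A | A+I)` indexed by `(v, i)`:
`i = 0` gives `φ(v)` (identity column), `i = 1` gives `χ(v)` (column of `A`),
`i = 2` gives `ψ(v)` (column of `A + I`). -/
def iasCol (A : Matrix V V (ZMod 2)) : V × Fin 3 → V → ZMod 2 :=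
  fun p w =>
    if p.2 = 0 then (if w = p.1 then 1 else 0)
    else if p.2 = 1 then A w p.1
    else A w p.1 + (if w = p.1 then 1 else 0)

/-- The rank of a subset of the ground set `W(G) = V × Fin 3` of the isotropic
matroid: the GF(2)-rank of the corresponding set of columns. -/
noncomputable def iasRank (A : Matrix V V (ZMod 2)) (S : Set (V × Fin 3)) : ℕ :=
  Module.finrank (ZMod 2) (Submodule.span (ZMod 2) (iasCol A '' S))

/-- The connectivity function `λ(S) = r(S) + r(W - S) - r(M)`. -/
noncomputable def iasLambda (A : Matrix V V (ZMod 2)) (S : Set (V × Fin 3)) : ℕ :=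
  iasRank A S + iasRank A Sᶜ - iasRank A Set.univ

/-- Independence in the isotropic matroid. -/
def iasIndep (A : Matrix V V (ZMod 2)) (S : Set (V × Fin 3)) : Prop :=
  LinearIndependent (ZMod 2) (fun s : S => iasCol A s.1)

/-- Circuits of the isotropic matroid: minimal dependent sets. -/
def iasCircuit (A : Matrix V V (ZMod 2)) (C : Set (V × Fin 3)) : Prop :=
  ¬ iasIndep A C ∧ ∀ S ⊂ C, iasIndep A S

/-- An ordinary `k`-separation: `λ(S) < k` and `|S|, |W - S| ≥ k`. -/
def OrdinarySep (A : Matrix V V (ZMod 2)) (k : ℕ) (S : Set (V × Fin 3)) : Prop :=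
  0 < k ∧ iasLambda A S < k ∧ k ≤ S.ncard ∧ k ≤ Sᶜ.ncard

/-- A cyclic `k`-separation: `λ(S) < k` and both `S` and `W - S` are dependent. -/
def CyclicSep (A : Matrix V V (ZMod 2)) (k : ℕ) (S : Set (V × Fin 3)) : Prop :=
  0 < k ∧ iasLambda A S < k ∧ ¬ iasIndep A S ∧ ¬ iasIndep A Sᶜ

/-- A vertical `k`-separation: `λ(S) < k` and `r(S), r(W - S) ≥ k`. -/
def VerticalSep (A : Matrix V V (ZMod 2)) (k : ℕ) (S : Set (V × Fin 3)) : Prop :=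
  0 < k ∧ iasLambda A S < k ∧ k ≤ iasRank A S ∧ k ≤ iasRank A Sᶜ

/-- `τ(M) = min {k : M has an ordinary k-separation}`, with `min ∅ = ∞`. -/
noncomputable def iasTau (A : Matrix V V (ZMod 2)) : ℕ∞ :=
  sInf {k : ℕ∞ | ∃ m : ℕ, (m : ℕ∞) = k ∧ ∃ S, OrdinarySep A m S}

/-- `κ*(M) = min ({k : M has a cyclic k-separation} ∪ {|W| - r(M)})`. -/
noncomputable def iasKappaStar (A : Matrix V V (ZMod 2)) : ℕ :=
  sInf ({k : ℕ | ∃ S, CyclicSep A k S} ∪ {3 * Fintype.card V - iasRank A Set.univ})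

/-- `κ(M) = min ({k : M has a vertical k-separation} ∪ {r(M)})`. -/
noncomputable def iasKappa (A : Matrix V V (ZMod 2)) : ℕ :=
  sInf ({k : ℕ | ∃ S, VerticalSep A k S} ∪ {iasRank A Set.univ})

/-- The simple graph underlying a looped simple graph given by its adjacency matrix. -/
def toSimpleGraph (A : Matrix V V (ZMod 2)) : SimpleGraph V where
  Adj v w := v ≠ w ∧ A v w = 1 ∧ A w v = 1
  symm := ⟨fun v w ⟨h1, h2, h3⟩ => ⟨Ne.symm h1, h3, h2⟩⟩
  loopless := ⟨fun v h => h.1 rfl⟩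

/-- The open neighborhood `N_G(v)`. -/
def nbhd (A : Matrix V V (ZMod 2)) (v : V) : Set V := {u | u ≠ v ∧ A v u = 1}

/-- `v` is a pendant vertex: `N_G(v) = {w}` for some `w`. -/
def IsPendant (A : Matrix V V (ZMod 2)) (v : V) : Prop := ∃ w, nbhd A v = {w}

/-- `G` has a pair of twin vertices: `v ≠ w` with `N_G(v) - {w} = N_G(w) - {v}`. -/
def HasTwins (A : Matrix V V (ZMod 2)) : Prop :=
  ∃ v w, v ≠ w ∧ nbhd A v \ {w} = nbhd A w \ {v}

/-- The cut-rank `c_G(X)`: the GF(2)-rank of the submatrix `A[V - X, X]`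
(columns indexed by `X`, rows indexed by `V - X`). -/
noncomputable def cutRank (A : Matrix V V (ZMod 2)) (X : Set V) : ℕ :=
  Module.finrank (ZMod 2)
    (Submodule.span (ZMod 2) ((fun x : V => fun w : ↥(Xᶜ) => A w.1 x) '' X))

/-- `τ_G(X) = ⋃_{x ∈ X} τ_G(x)`, the union of the vertex triples of members of `X`. -/
def tauSet (X : Set V) : Set (V × Fin 3) := {p | p.1 ∈ X}

/-- Loop complementation at `v`. -/
def loopComp (A : Matrix V V (ZMod 2)) (v : V) : Matrix V V (ZMod 2) :=
  fun x y => A x y + if x = v ∧ y = v then 1 else 0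

/-- Simple local complementation at `v`. -/
def simpleLocalComp (A : Matrix V V (ZMod 2)) (v : V) : Matrix V V (ZMod 2) :=
  fun x y => A x y +
    if x ≠ y ∧ (x ≠ v ∧ A v x = 1) ∧ (y ≠ v ∧ A v y = 1) then 1 else 0

/-- Non-simple local complementation at `v`. -/
def nonSimpleLocalComp (A : Matrix V V (ZMod 2)) (v : V) : Matrix V V (ZMod 2) :=
  fun x y => simpleLocalComp A v x y + if x = y ∧ x ≠ v ∧ A v x = 1 then 1 else 0

/-- One local move. -/
def LocalStep (A B : Matrix V V (ZMod 2)) : Prop :=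
  ∃ v, B = loopComp A v ∨ B = simpleLocalComp A v ∨ B = nonSimpleLocalComp A v

/-- Local equivalence: a finite sequence of loop complementations and
(simple or non-simple) local complementations. -/
def LocallyEquiv (A B : Matrix V V (ZMod 2)) : Prop :=
  Relation.ReflTransGen LocalStep A B

/-- `G` has a split: a bipartition `(V₁, V₂)` of `V` with `|V₁|, |V₂| ≥ 2` such that the
GF(2)-rank of `A[V₁, V₂]` is at most 1. -/
def HasSplit (A : Matrix V V (ZMod 2)) : Prop :=
  ∃ X : Set V, 2 ≤ X.ncard ∧ 2 ≤ Xᶜ.ncard ∧ cutRank A X ≤ 1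

/-- A transverse circuit: a circuit of the isotropic matroid meeting each
vertex triple at most once. -/
def IsTransverseCircuit (A : Matrix V V (ZMod 2)) (C : Set (V × Fin 3)) : Prop :=
  iasCircuit A C ∧ ∀ p ∈ C, ∀ q ∈ C, p.1 = q.1 → p = q

/-- An isotropic `k`-separation of `G`: `|X|, |V - X| ≥ k` and `c_G(X) < k`. -/
def IsotropicSep (A : Matrix V V (ZMod 2)) (k : ℕ) (X : Set V) : Prop :=
  k ≤ X.ncard ∧ k ≤ Xᶜ.ncard ∧ cutRank A X < k

/-- The isotropic connectivity `κ_B(G)`, with `min ∅ = ∞`. -/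
noncomputable def kappaB (A : Matrix V V (ZMod 2)) : ℕ∞ :=
  sInf {j : ℕ∞ | ∃ k : ℕ, (k : ℕ∞) = j ∧ ∃ X, IsotropicSep A k X}

/-- The 5-cycle `C₅`. -/
def C5mat : Matrix (Fin 5) (Fin 5) (ZMod 2) :=
  fun i j => if (i.val + 1) % 5 = j.val ∨ (j.val + 1) % 5 = i.val then 1 else 0

/-- The wheel `W₅` : a 5-cycle on `{0,…,4}` plus a hub `5` adjacent to all. -/
def W5mat : Matrix (Fin 6) (Fin 6) (ZMod 2) :=
  fun i j =>
    if (i.val = 5 ∧ j.val ≠ 5) ∨ (j.val = 5 ∧ i.val ≠ 5) then 1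
    else if i.val ≠ 5 ∧ j.val ≠ 5 ∧ ((i.val + 1) % 5 = j.val ∨ (j.val + 1) % 5 = i.val) then 1
    else 0

/-!
Every column of `IAS(G)` is the sum of the other two columns of its vertex triple, so a set `S`
spans the whole triple of each vertex it meets at least twice, and every vertex is met at least
twice by `S` or by `W - S`. The identity columns of `X` contribute `|X|` to `r(τ(X))`, and modulo
them the `A`-columns of `X` are the columns of `A[V - X, X]`; hence `r(τ(X)) = |X| + c_G(X)`.
Taking `X` to be the vertices met twice by `S`, and using `c_G(V - X) = c_G(X)`, this gives
`λ(S) ≥ 2 c_G(X)` for every `S`, while `τ(X)` itself is a vertical `(2 c_G(X) + 1)`-separation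
as soon as `c_G(X) < min(|X|, |V - X|)`.
-/

open Module

theorem Pi.finrank_spanSubset_sup {K ι : Type*} [Field K] [Fintype ι] (X : Set ι)
    (W : Submodule K (ι → K)) :
    finrank K ↥(Pi.spanSubset K X ⊔ W) =
      X.ncard + finrank K ↥(W.map (LinearMap.funLeft K K ((↑) : ↥Xᶜ → ι))) := by
  set ρ := LinearMap.funLeft K K ((↑) : ↥Xᶜ → ι)
  have hker : LinearMap.ker ρ = Pi.spanSubset K X := by
    ext f
    simp only [LinearMap.mem_ker, Pi.mem_spanSubset_iff, funext_iff]
    exact ⟨fun h i hi => h ⟨i, hi⟩, fun h i => h i i.2⟩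
  have hmap : (Pi.spanSubset K X).map ρ = ⊥ := by
    rw [← LinearMap.le_ker_iff_map, hker]
  have hle : LinearMap.ker ρ ≤ Pi.spanSubset K X ⊔ W := hker ▸ le_sup_left
  rw [← (ρ.domRestrict _).finrank_range_add_finrank_ker, LinearMap.range_domRestrict,
    LinearMap.ker_domRestrict, (Submodule.comapSubtypeEquivOfLe hle).finrank_eq, hker,
    Pi.dim_spanSubset, Submodule.map_sup, hmap, bot_sup_eq, add_comm]

/-- The vertices `v` such that `S` contains at least two of `(v, 0), (v, 1), (v, 2)`. -/
def majorityVertices {ι : Type*} (S : Set (ι × Fin 3)) : Set ι :=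
  {v | ∀ i : Fin 3, (v, i) ∈ S ∨ (v, i + 1) ∈ S}

theorem compl_majorityVertices_subset {ι : Type*} (S : Set (ι × Fin 3)) :
    (majorityVertices S)ᶜ ⊆ majorityVertices Sᶜ := by
  intro v hv j
  obtain ⟨i, hi, hi'⟩ : ∃ i, (v, i) ∉ S ∧ (v, i + 1) ∉ S := by simpa [majorityVertices] using hv
  fin_cases i <;> fin_cases j <;> simp_all

section CutRank

variable {ι : Type*}

theorem cutRank_eq_rank_submatrix (A : Matrix ι ι (ZMod 2)) (X : Set ι) [Fintype ↥X] :
    cutRank A X = (A.submatrix ((↑) : ↥Xᶜ → ι) ((↑) : ↥X → ι)).rank := by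
  rw [Matrix.rank_eq_finrank_span_cols, cutRank, Set.image_eq_range]
  rfl

variable [Fintype ι]

theorem cutRank_le_min (A : Matrix ι ι (ZMod 2)) (X : Set ι) :
    cutRank A X ≤ min X.ncard Xᶜ.ncard := by
  classical
  rw [cutRank_eq_rank_submatrix, Set.ncard_eq_toFinset_card', Set.ncard_eq_toFinset_card',
    Set.toFinset_card, Set.toFinset_card]
  exact le_min (Matrix.rank_le_card_width _) (Matrix.rank_le_card_height _)

theorem cutRank_compl {A : Matrix ι ι (ZMod 2)} (hA : A.IsSymm) (X : Set ι) :
    cutRank A Xᶜ = cutRank A X := by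
  classical
  rw [cutRank_eq_rank_submatrix, cutRank_eq_rank_submatrix, ← Matrix.rank_transpose,
    Matrix.transpose_submatrix, hA.eq]
  convert Matrix.rank_submatrix (A.submatrix ((↑) : ↥Xᶜ → ι) ((↑) : ↥X → ι)) (Equiv.refl _)
    (Equiv.setCongr (compl_compl X)) using 2
  rfl

end CutRank

section IsotropicMatroid

variable {ι : Type*} [DecidableEq ι] (A : Matrix ι ι (ZMod 2))

theorem iasCol_eq_add (v : ι) (i : Fin 3) :
    iasCol A (v, i) = iasCol A (v, i + 1) + iasCol A (v, i + 2) := by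
  ext w
  fin_cases i <;>
    simp only [iasCol, Fin.zero_eta, Fin.mk_one, Fin.reduceFinMk, Fin.isValue, Fin.reduceAdd,
      Fin.reduceEq, one_ne_zero, ↓reduceIte, zero_add, Pi.add_apply] <;>
    split_ifs <;> generalize A w v = a <;> revert a <;> decide

theorem iasCol_mem_span_of_mem_majorityVertices {S : Set (ι × Fin 3)} {v : ι}
    (hv : v ∈ majorityVertices S) (i : Fin 3) :
    iasCol A (v, i) ∈ Submodule.span (ZMod 2) (iasCol A '' S) := by
  have mem {j : Fin 3} (hj : (v, j) ∈ S) :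
      iasCol A (v, j) ∈ Submodule.span (ZMod 2) (iasCol A '' S) :=
    Submodule.subset_span ⟨_, hj, rfl⟩
  by_cases hi : (v, i) ∈ S
  · exact mem hi
  have hi1 : (v, i + 1) ∈ S := (hv i).resolve_left hi
  have hi2 : (v, i + 2) ∈ S := (hv (i + 2)).resolve_right (by fin_cases i <;> exact hi)
  rw [iasCol_eq_add]
  exact add_mem (mem hi1) (mem hi2)

variable [Fintype ι]

theorem iasRank_tauSet_le_of_subset_majorityVertices {S : Set (ι × Fin 3)} {X : Set ι}
    (hX : X ⊆ majorityVertices S) : iasRank A (tauSet X) ≤ iasRank A S := by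
  refine Submodule.finrank_mono (Submodule.span_le.2 ?_)
  rintro _ ⟨⟨v, i⟩, hv, rfl⟩
  exact iasCol_mem_span_of_mem_majorityVertices A (hX hv) i

theorem span_iasCol_tauSet (X : Set ι) :
    Submodule.span (ZMod 2) (iasCol A '' tauSet X) =
      Pi.spanSubset (ZMod 2) X ⊔ Submodule.span (ZMod 2) ((fun v w => A w v) '' X) := by
  set C := Submodule.span (ZMod 2) ((fun v w => A w v) '' X)
  have hcol₀ (v : ι) : iasCol A (v, 0) = Pi.basisFun (ZMod 2) ι v := by
    ext w
    simp [iasCol, Pi.single_apply]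
  apply le_antisymm
  · rw [Submodule.span_le]
    rintro _ ⟨⟨v, i⟩, hv, rfl⟩
    have h₀ : iasCol A (v, 0) ∈ Pi.spanSubset (ZMod 2) X ⊔ C :=
      Submodule.mem_sup_left (Submodule.subset_span ⟨v, hv, (hcol₀ v).symm⟩)
    have h₁ : iasCol A (v, 1) ∈ Pi.spanSubset (ZMod 2) X ⊔ C :=
      Submodule.mem_sup_right (Submodule.subset_span ⟨v, hv, rfl⟩)
    fin_cases i
    · exact h₀
    · exact h₁
    · exact add_mem h₁ h₀
  · refine sup_le (Submodule.span_mono ?_) (Submodule.span_mono ?_)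
    · rintro _ ⟨v, hv, rfl⟩
      exact ⟨(v, 0), hv, hcol₀ v⟩
    · rintro _ ⟨v, hv, rfl⟩
      exact ⟨(v, 1), hv, rfl⟩

theorem iasRank_tauSet (X : Set ι) : iasRank A (tauSet X) = X.ncard + cutRank A X := by
  rw [iasRank, span_iasCol_tauSet, Pi.finrank_spanSubset_sup, Submodule.map_span,
    Set.image_image]
  rfl

theorem iasRank_univ : iasRank A Set.univ = Fintype.card ι := by
  have hcut : cutRank A Set.univ = 0 := by simp [cutRank, funext_iff]
  rw [← Nat.card_eq_fintype_card, ← Set.ncard_univ, ← add_zero (Set.ncard _), ← hcut,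
    ← iasRank_tauSet]
  rfl

theorem iasLambda_eq (S : Set (ι × Fin 3)) :
    iasLambda A S = iasRank A S + iasRank A Sᶜ - Nat.card ι := by
  rw [iasLambda, iasRank_univ, Nat.card_eq_fintype_card]

variable {A}

theorem exists_cutRank_lt_of_verticalSep (hA : A.IsSymm) {k : ℕ} {S : Set (ι × Fin 3)}
    (h : VerticalSep A k S) :
    ∃ X : Set ι, 2 * cutRank A X < k ∧ cutRank A X < min X.ncard Xᶜ.ncard := by
  obtain ⟨-, hlam, hS, hSc⟩ := h
  set X := majorityVertices S
  have hX : X.ncard + cutRank A X ≤ iasRank A S := by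
    rw [← iasRank_tauSet]
    exact iasRank_tauSet_le_of_subset_majorityVertices A subset_rfl
  have hXc : Xᶜ.ncard + cutRank A X ≤ iasRank A Sᶜ := by
    rw [← cutRank_compl hA, ← iasRank_tauSet]
    exact iasRank_tauSet_le_of_subset_majorityVertices A (compl_majorityVertices_subset S)
  have hcard := Set.ncard_add_ncard_compl X
  rw [iasLambda_eq] at hlam
  exact ⟨X, by omega, by omega⟩

theorem verticalSep_tauSet (hA : A.IsSymm) {X : Set ι}
    (hX : cutRank A X < min X.ncard Xᶜ.ncard) :
    VerticalSep A (2 * cutRank A X + 1) (tauSet X) := by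
  have hr := iasRank_tauSet A X
  have hrc : iasRank A (tauSet X)ᶜ = Xᶜ.ncard + cutRank A X := by
    rw [← cutRank_compl hA]
    exact iasRank_tauSet A Xᶜ
  have hcard := Set.ncard_add_ncard_compl X
  rw [VerticalSep, iasLambda_eq]
  omega

end IsotropicMatroid

theorem stmt6 (A : Matrix V V (ZMod 2)) (hA : A.IsSymm) :
    ((∀ X : Set V, cutRank A X = min X.ncard Xᶜ.ncard) →
      iasKappa A = Fintype.card V) ∧
    ((∃ X : Set V, cutRank A X ≠ min X.ncard Xᶜ.ncard) →
      iasKappa A = 1 + 2 * sInf {c : ℕ |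
        ∃ X : Set V, cutRank A X < min X.ncard Xᶜ.ncard ∧ cutRank A X = c}) := by
  constructor
  · intro hfull
    have hnone : {k | ∃ S, VerticalSep A k S} = ∅ := by
      refine Set.eq_empty_of_forall_notMem fun k ⟨S, hS⟩ => ?_
      obtain ⟨X, -, hX⟩ := exists_cutRank_lt_of_verticalSep hA hS
      exact hX.ne (hfull X)
    rw [iasKappa, hnone, Set.empty_union, csInf_singleton, iasRank_univ]
  · rintro ⟨X₀, hX₀⟩
    set T := {c : ℕ | ∃ X : Set V, cutRank A X < min X.ncard Xᶜ.ncard ∧ cutRank A X = c}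
    obtain ⟨X, hX, hXT⟩ : sInf T ∈ T :=
      Nat.sInf_mem ⟨_, X₀, (cutRank_le_min A X₀).lt_of_ne hX₀, rfl⟩
    have hcard := Set.ncard_add_ncard_compl X
    rw [iasKappa, iasRank_univ]
    apply le_antisymm
    · refine Nat.sInf_le (Or.inl ⟨tauSet X, ?_⟩)
      simpa only [hXT, add_comm] using verticalSep_tauSet hA hX
    · refine le_csInf ⟨_, Or.inr rfl⟩ ?_
      rintro k (⟨S, hS⟩ | rfl)
      · obtain ⟨Y, hYk, hY⟩ := exists_cutRank_lt_of_verticalSep hA hS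
        have hmin : sInf T ≤ cutRank A Y := Nat.sInf_le ⟨Y, hY, rfl⟩
        omega
      · rw [Nat.card_eq_fintype_card] at hcard
        omega
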